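/- arXiv:1501.05019 — 2 statements merged into one kernel-verified Lean document; each statement's English description precedes it below -/
import Mathlib

section
/- For α = 1/2 and ρ = 1, the limiting robustness equations 4λ₀² + 4λ₁² + 8λ₀λ₁a - 1 = 0, 4 - 8λ₀ - 8λ₁a - ε₀ = 0, 4 - 8λ₁ - 8λ₀a - ε₁ = 0 in unknowns λ₀, λ₁ imply the consistency equation 2ε₁(a(ε₀-4)+4) - (4a+ε₀-4)² - ε₁² = 0 relating a, ε₀, ε₁. -/
/-! With `u = 4 - ε₀` and `v = 4 - ε₁`, the linear equations say that `(u, v) = G (8λ₀, 8λ₁)` for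
the Gram matrix `G = [[1, a], [a, 1]]`. Evaluating the adjugate form `u² + v² - 2auv` of `G` on
`G x` gives `det G · xᵀ G x`, and the quadratic equation fixes `xᵀ G x = 16`; so
`u² + v² - 2auv = 16 (1 - a²)`, which is the consistency equation after expanding in `ε₀, ε₁`. -/

theorem adjugate_form_eq_det_mul_gram_form {R : Type*} [CommRing R] (a x y u v : R)
    (hu : x + a * y = u) (hv : y + a * x = v) :
    u ^ 2 + v ^ 2 - 2 * a * u * v = (1 - a ^ 2) * (x ^ 2 + y ^ 2 + 2 * a * x * y) := by
  subst hu hv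
  ring

theorem limiting_robustness_consistency_general
    (a ε₀ ε₁ lam₀ lam₁ : ℝ)
    (h1 : 4 * lam₀ ^ 2 + 4 * lam₁ ^ 2 + 8 * lam₀ * lam₁ * a - 1 = 0)
    (h2 : 4 - 8 * lam₀ - 8 * lam₁ * a - ε₀ = 0)
    (h3 : 4 - 8 * lam₁ - 8 * lam₀ * a - ε₁ = 0) :
    2 * ε₁ * (a * (ε₀ - 4) + 4) - (4 * a + ε₀ - 4) ^ 2 - ε₁ ^ 2 = 0 := by
  have key := adjugate_form_eq_det_mul_gram_form a (8 * lam₀) (8 * lam₁) (4 - ε₀) (4 - ε₁)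
    (by linear_combination -h2) (by linear_combination -h3)
  linear_combination -key - 16 * (1 - a ^ 2) * h1

/-- Elimination of the multipliers lam₀, lam₁ from the limiting robustness
equations (α = 1/2, ρ = 1) yields the consistency equation in a, ε₀, ε₁. -/
theorem limiting_robustness_consistency
    (a ε₀ ε₁ lam₀ lam₁ : ℝ) (ha : a ^ 2 ≠ 1)
    (h1 : 4 * lam₀ ^ 2 + 4 * lam₁ ^ 2 + 8 * lam₀ * lam₁ * a - 1 = 0)
    (h2 : 4 - 8 * lam₀ - 8 * lam₁ * a - ε₀ = 0)
    (h3 : 4 - 8 * lam₁ - 8 * lam₀ * a - ε₁ = 0) :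
    2 * ε₁ * (a * (ε₀ - 4) + 4) - (4 * a + ε₀ - 4) ^ 2 - ε₁ ^ 2 = 0 :=
  limiting_robustness_consistency_general a ε₀ ε₁ lam₀ lam₁ h1 h2 h3
end

section
/- In the symmetric case ε := ε₀ = ε₁, the maximum robustness parameter is ε_max = 4 - 2√(2(1+a)): substituting ε₀ = ε₁ = 4 - 2√(2(1+a)) into a = (1/16)(16 - 4ε₁ + ε₀(ε₁-4) - √((ε₀-8)ε₀(ε₁-8)ε₁)) returns a, for all a ∈ [0,1]. -/
/-! The radicand is the perfect square `((8 - ε) ε)²`, so for `0 ≤ ε ≤ 8` the symmetric root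
formula collapses to the polynomial `(ε - 4)² / 8 - 1`; at `ε = 4 - 2√(2(1+a))` this is
`(2(1+a)) / 2 - 1 = a`. -/

lemma sqrt_symm_radicand {ε : ℝ} (hε0 : 0 ≤ ε) (hε8 : ε ≤ 8) :
    Real.sqrt ((ε - 8) * ε * (ε - 8) * ε) = (8 - ε) * ε := by
  rw [show (ε - 8) * ε * (ε - 8) * ε = ((8 - ε) * ε) ^ 2 by ring]
  exact Real.sqrt_sq (mul_nonneg (by linarith) hε0)

lemma symm_root_formula_eq {ε : ℝ} (hε0 : 0 ≤ ε) (hε8 : ε ≤ 8) :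
    (1 / 16) * (16 - 4 * ε + ε * (ε - 4) - Real.sqrt ((ε - 8) * ε * (ε - 8) * ε))
      = (ε - 4) ^ 2 / 8 - 1 := by
  rw [sqrt_symm_radicand hε0 hε8]
  ring

/-- In the symmetric case ε₀ = ε₁ = 4 - 2√(2(1+a)), the root formula for a
returns a, for all a ∈ [0,1]. -/
theorem symmetric_max_robustness
    (a : ℝ) (ha : a ∈ Set.Icc (0:ℝ) 1) :
    let ε := 4 - 2 * Real.sqrt (2 * (1 + a))
    (1 / 16) * (16 - 4 * ε + ε * (ε - 4)
      - Real.sqrt ((ε - 8) * ε * (ε - 8) * ε)) = a := by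
  obtain ⟨ha0, ha1⟩ := ha
  intro ε
  have hsq : Real.sqrt (2 * (1 + a)) ^ 2 = 2 * (1 + a) := Real.sq_sqrt (by linarith)
  have hle : Real.sqrt (2 * (1 + a)) ≤ 2 := Real.sqrt_le_iff.mpr ⟨by norm_num, by linarith⟩
  have hnonneg : 0 ≤ Real.sqrt (2 * (1 + a)) := Real.sqrt_nonneg _
  rw [symm_root_formula_eq (by linarith) (by linarith)]
  calc (ε - 4) ^ 2 / 8 - 1 = Real.sqrt (2 * (1 + a)) ^ 2 / 2 - 1 := by ring
    _ = a := by rw [hsq]; ring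
end
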